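/- arXiv:1605.04503 — 2 statements merged into one kernel-verified Lean document; each statement's English description precedes it below -/
import Mathlib

section
/- For m ≥ 4, the set ⟨1,K_m⟩ = {2t_{m-1}, 2t_{m-1}+1, …, k_{m+4}−2} has cardinality k_m − 1; equivalently, k_{m+4} − 2 − 2t_{m-1} + 1 = k_m − 1, i.e. k_{m+4} = 2t_{m-1} + k_m for m ≥ 4. -/
/-!
The difference k_{m+4} − k_m satisfies the homogeneous Tribonacci recurrence, because the
constants −1 in the recurrences of the k_{m+4} and of the k_m cancel; it agrees with 2t_{m-1} for
m = 0, 1, 2, hence for all m. The cardinality of the interval is then k_{m+4} − 1 − 2t_{m-1}.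
-/

/-- Tribonacci numbers, index-shifted so that `trib n` represents t_{n-2}:
`trib 0 = t₋₂ = 0`, `trib 1 = t₋₁ = 1`, `trib 2 = t₀ = 1`, and
`trib (n+3) = trib (n+2) + trib (n+1) + trib n`. -/
def trib : ℕ → ℕ
  | 0 => 0
  | 1 => 1
  | 2 => 1
  | n + 3 => trib (n + 2) + trib (n + 1) + trib n

/-- Kernel numbers: k₀ = 0, k₁ = k₂ = 1, k_m = k_{m-1} + k_{m-2} + k_{m-3} - 1 for m ≥ 3. -/
def ker : ℕ → ℕ
  | 0 => 0
  | 1 => 1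
  | 2 => 1
  | n + 3 => ker (n + 2) + ker (n + 1) + ker n - 1

lemma one_le_trib : ∀ {n : ℕ}, n ≠ 0 → 1 ≤ trib n
  | 1, _ | 2, _ => le_rfl
  | n + 3, _ => by
    have := one_le_trib (n := n + 2) (by omega)
    rw [trib]
    omega

lemma one_le_ker : ∀ {n : ℕ}, n ≠ 0 → 1 ≤ ker n
  | 1, _ | 2, _ => le_rfl
  | n + 3, _ => by
    have := one_le_ker (n := n + 2) (by omega)
    have := one_le_ker (n := n + 1) (by omega)
    rw [ker]
    omega

lemma ker_add_three_add_one (n : ℕ) : ker (n + 3) + 1 = ker (n + 2) + ker (n + 1) + ker n := by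
  have := one_le_ker (n := n + 2) (by omega)
  rw [ker]
  omega

lemma ker_add_four : ∀ n : ℕ, ker (n + 4) = 2 * trib (n + 1) + ker n
  | 0 | 1 | 2 => rfl
  | n + 3 => by
    have h₀ : ker (n + 4) = 2 * trib (n + 1) + ker n := ker_add_four n
    have h₁ : ker (n + 5) = 2 * trib (n + 2) + ker (n + 1) := ker_add_four (n + 1)
    have h₂ : ker (n + 6) = 2 * trib (n + 3) + ker (n + 2) := ker_add_four (n + 2)
    have h₃ := ker_add_three_add_one n
    have h₇ : ker (n + 7) + 1 = ker (n + 6) + ker (n + 5) + ker (n + 4) :=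
      ker_add_three_add_one (n + 4)
    have htrib : trib (n + 4) = trib (n + 3) + trib (n + 2) + trib (n + 1) := rfl
    show ker (n + 7) = 2 * trib (n + 4) + ker (n + 3)
    omega

theorem card_set_one_Km_general (m : ℕ) :
    (Finset.Icc (2 * trib (m + 1)) (ker (m + 4) - 2)).card = ker m - 1 ∧
      ker (m + 4) = 2 * trib (m + 1) + ker m := by
  refine ⟨?_, ker_add_four m⟩
  have := one_le_trib (n := m + 1) (by omega)
  rw [Nat.card_Icc, ker_add_four]
  omega

/-- For m ≥ 4, the set ⟨1,K_m⟩ = {2t_{m-1}, …, k_{m+4} − 2} has cardinality k_m − 1;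
equivalently k_{m+4} = 2t_{m-1} + k_m.  (Here `trib (m+1)` = t_{m-1}.) -/
theorem card_set_one_Km (m : ℕ) (hm : 4 ≤ m) :
    (Finset.Icc (2 * trib (m + 1)) (ker (m + 4) - 2)).card = ker m - 1 ∧
      ker (m + 4) = 2 * trib (m + 1) + ker m :=
  card_set_one_Km_general m
end

section
/- For m ≥ 4, define Δ_m = ∑_{i=4}^{m} (k_i − 1). Then 2·Δ_m = t_{m-2} + t_{m-3} − m. -/
/-!
With `T = trib`, the kernel numbers satisfy `2 kₙ = T n - T (n - 2) + 1` for `n ≥ 2`: both sides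
satisfy `y (n + 3) = y (n + 2) + y (n + 1) + y n - 2` and agree for `n = 2, 3, 4`. Hence
`2 (kᵢ - 1) = T i - T (i - 2) - 1`, and the sum over `4 ≤ i ≤ m` telescopes to
`T m + T (m - 1) - T 3 - T 2 - (m - 3) = T m + T (m - 1) - m`.
-/

theorem one_le_ker_succ : ∀ n, 1 ≤ ker (n + 1)
  | 0 => le_rfl
  | 1 => le_rfl
  | n + 2 => by
    have h₁ : 1 ≤ ker (n + 1) := one_le_ker_succ n
    have h₂ : 1 ≤ ker (n + 2) := one_le_ker_succ (n + 1)
    show 1 ≤ ker (n + 2) + ker (n + 1) + ker n - 1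
    omega

theorem cast_ker_add_three (n : ℕ) :
    (ker (n + 3) : ℤ) = ker (n + 2) + ker (n + 1) + ker n - 1 := by
  have : 1 ≤ ker (n + 2) := one_le_ker_succ (n + 1)
  rw [show ker (n + 3) = ker (n + 2) + ker (n + 1) + ker n - 1 from rfl, Nat.cast_sub (by omega)]
  push_cast
  ring

theorem cast_trib_add_three (n : ℕ) :
    (trib (n + 3) : ℤ) = trib (n + 2) + trib (n + 1) + trib n := by
  rw [trib]
  push_cast
  ring

theorem two_mul_ker_add_two : ∀ n, 2 * (ker (n + 2) : ℤ) = trib (n + 2) - trib n + 1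
  | 0 => by decide
  | 1 => by decide
  | 2 => by decide
  | n + 3 => by
    have h₀ := two_mul_ker_add_two n
    have h₁ : 2 * (ker (n + 3) : ℤ) = trib (n + 3) - trib (n + 1) + 1 :=
      two_mul_ker_add_two (n + 1)
    have h₂ : 2 * (ker (n + 4) : ℤ) = trib (n + 4) - trib (n + 2) + 1 :=
      two_mul_ker_add_two (n + 2)
    have hk : (ker (n + 5) : ℤ) = ker (n + 4) + ker (n + 3) + ker (n + 2) - 1 :=
      cast_ker_add_three (n + 2)
    have ht₅ : (trib (n + 5) : ℤ) = trib (n + 4) + trib (n + 3) + trib (n + 2) :=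
      cast_trib_add_three (n + 2)
    have ht₃ := cast_trib_add_three n
    show 2 * (ker (n + 5) : ℤ) = trib (n + 5) - trib (n + 3) + 1
    linarith

theorem two_mul_sum_Icc_ker_sub_one (n : ℕ) :
    2 * ∑ i ∈ Finset.Icc 4 (n + 3), ((ker i : ℤ) - 1) =
      (trib (n + 3) : ℤ) + trib (n + 2) - (n + 3 : ℕ) := by
  induction n with
  | zero => decide
  | succ n ih =>
    rw [Finset.sum_Icc_succ_top (by omega), mul_add, ih]
    have :=
      two_mul_ker_add_two (n + 2)
    push_cast
    linarith

theorem two_mul_Delta_general (m : ℕ) :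
    2 * ∑ i ∈ Finset.Icc 4 m, ((ker i : ℤ) - 1) =
      (trib m : ℤ) + trib (m - 1) - m := by
  rcases Nat.lt_or_ge m 3 with hm | hm
  · interval_cases m <;> decide
  · obtain ⟨n, rfl⟩ := Nat.exists_eq_add_of_le' hm
    exact two_mul_sum_Icc_ker_sub_one n

/-- For m ≥ 4, with Δ_m = ∑_{i=4}^{m} (k_i − 1), we have 2·Δ_m = t_{m-2} + t_{m-3} − m
(stated over ℤ; `trib m` = t_{m-2}, `trib (m-1)` = t_{m-3}). -/
theorem two_mul_Delta (m : ℕ) (hm : 4 ≤ m) :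
    2 * ∑ i ∈ Finset.Icc 4 m, ((ker i : ℤ) - 1) =
      (trib m : ℤ) + trib (m - 1) - m :=
  two_mul_Delta_general m
end
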